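/- arXiv:0911.2039 — 5 statements merged into one kernel-verified Lean document; each statement's English description precedes it below -/
import Mathlib

section
/- For every a ∈ ℂ, the translation operator f(z) ↦ f(z+a) on polynomials of degree at most 2n is orthogonal with respect to the bilinear form; that is, ⟨f(z+a), g(z+a)⟩ = ⟨f, g⟩ for all f, g. -/
/-!
Since `m! * f.coeff m` is `f⁽ᵐ⁾(0)`, `formB n f g` is the value at `0` of the bilinear
concomitant `P = ∑ₘ (-1)ᵐ f⁽ᵐ⁾ g⁽²ⁿ⁻ᵐ⁾`. Derivatives commute with translation, so translating
`f` and `g` by `a` turns this into `P(a)`. By Lagrange's identity `P' = f g⁽²ⁿ⁺¹⁾ + f⁽²ⁿ⁺¹⁾ g`,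
which vanishes in degree `≤ 2n`; hence `P` is constant and `P(a) = P(0)`.
-/

open Polynomial

noncomputable def formB (n : ℕ) (f g : Polynomial ℂ) : ℂ :=
  ∑ m ∈ Finset.range (2 * n + 1),
    (-1 : ℂ) ^ m * ((m.factorial : ℂ) * f.coeff m) *
      (((2 * n - m).factorial : ℂ) * g.coeff (2 * n - m))

namespace Polynomial

variable {R : Type*}

theorem iterate_derivative_eval_zero [Semiring R] (p : R[X]) (k : ℕ) :
    (derivative^[k] p).eval 0 = k.factorial * p.coeff k := by
  rw [← coeff_zero_eq_eval_zero, coeff_iterate_derivative, zero_add, Nat.descFactorial_self,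
    nsmul_eq_mul]

theorem iterate_derivative_comp_X_add_C [CommSemiring R] (p : R[X]) (a : R) (k : ℕ) :
    derivative^[k] (p.comp (X + C a)) = (derivative^[k] p).comp (X + C a) := by
  induction k generalizing p with
  | zero => rfl
  | succ k ih => simp [ih, derivative_comp]

theorem eval_eq_eval_zero_of_derivative_eq_zero [Semiring R] [IsAddTorsionFree R] {p : R[X]}
    (hp : derivative p = 0) (a : R) : p.eval a = p.eval 0 := by
  rw [eq_C_of_natDegree_eq_zero (derivative_eq_zero.mp hp)]
  simp only [eval_C]

section Concomitant

variable [CommRing R]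

noncomputable def concomitant (N : ℕ) (f g : R[X]) : R[X] :=
  ∑ m ∈ Finset.range (N + 1), (-1) ^ m * derivative^[m] f * derivative^[N - m] g

theorem derivative_concomitant (N : ℕ) (f g : R[X]) :
    derivative (concomitant N f g) =
      f * derivative^[N + 1] g - (-1) ^ (N + 1) * derivative^[N + 1] f * g := by
  set v : ℕ → R[X] := fun m => (-1) ^ m * derivative^[m] f * derivative^[N + 1 - m] g
  have hterm : ∀ m ∈ Finset.range (N + 1),
      derivative ((-1) ^ m * derivative^[m] f * derivative^[N - m] g) = v m - v (m + 1) := by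
    intro m hm
    have hNm : N + 1 - m = N - m + 1 := by grind
    simp only [v, hNm, Nat.add_sub_add_right, Function.iterate_succ_apply', derivative_mul,
      derivative_pow, derivative_neg, derivative_one]
    ring
  rw [concomitant, derivative_sum, Finset.sum_congr rfl hterm, Finset.sum_range_sub']
  simp [v]

theorem concomitant_comp_X_add_C (N : ℕ) (f g : R[X]) (a : R) :
    concomitant N (f.comp (X + C a)) (g.comp (X + C a)) =
      (concomitant N f g).comp (X + C a) := by
  simp [concomitant, iterate_derivative_comp_X_add_C, sum_comp, mul_comp]

end Concomitant

end Polynomial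

theorem formB_eq_eval_concomitant (n : ℕ) (f g : ℂ[X]) :
    formB n f g = (concomitant (2 * n) f g).eval 0 := by
  simp only [formB, concomitant, eval_finsetSum, eval_mul, eval_pow, eval_neg, eval_one,
    iterate_derivative_eval_zero]

theorem formB_translation_orthogonal_general (n : ℕ) (a : ℂ)
    (f g : Polynomial ℂ) (hf : f ∈ Polynomial.degreeLE ℂ (2 * n))
    (hg : g ∈ Polynomial.degreeLE ℂ (2 * n)) :
    formB n (f.comp (X + C a)) (g.comp (X + C a)) = formB n f g := by
  have hD : ∀ p ∈ degreeLE ℂ (2 * n), derivative^[2 * n + 1] p = 0 := fun p hp =>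
    iterate_derivative_eq_zero_of_degree_lt
      ((mem_degreeLE.mp hp).trans_lt (by exact_mod_cast Nat.lt_succ_self _))
  have hconst : derivative (concomitant (2 * n) f g) = 0 := by
    rw [derivative_concomitant, hD f hf, hD g hg]
    simp only [mul_zero, zero_mul, sub_self]
  rw [formB_eq_eval_concomitant, formB_eq_eval_concomitant, concomitant_comp_X_add_C, eval_comp]
  simpa using eval_eq_eval_zero_of_derivative_eq_zero hconst a

theorem formB_translation_orthogonal (n : ℕ) (hn : 0 < n) (a : ℂ)
    (f g : Polynomial ℂ) (hf : f ∈ Polynomial.degreeLE ℂ (2 * n))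
    (hg : g ∈ Polynomial.degreeLE ℂ (2 * n)) :
    formB n (f.comp (X + C a)) (g.comp (X + C a)) = formB n f g :=
  formB_translation_orthogonal_general n a f g hf hg
end

section
/- For a ∈ ℂ and 0 ≤ i ≤ 2n+1, the orthogonal complement of F_i(a) with respect to the bilinear form ⟨·,·⟩ equals F_{2n+1-i}(a), where F_i(a) is the subspace of polynomials of degree at most 2n divisible by (z+a)^{2n+1-i}. -/
open Polynomial

/-- `F i a` : polynomials of degree at most `2n` divisible by `(z+a)^(2n+1-i)`. -/
noncomputable def osculatingFlag (n : ℕ) (a : ℂ) (i : ℕ) : Submodule ℂ (Polynomial ℂ) :=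
  Polynomial.degreeLE ℂ (2 * n) ⊓
    (Ideal.span {((X + C a) ^ (2 * n + 1 - i) : Polynomial ℂ)}).restrictScalars ℂ

lemma factorial_mul_taylor_coeff (p : Polynomial ℂ) (m : ℕ) (x : ℂ) :
    (m.factorial : ℂ) * (taylor x p).coeff m = (derivative^[m] p).eval x := by
  rw [taylor_coeff, ← Polynomial.factorial_smul_hasseDeriv]
  simp [Polynomial.eval_smul, nsmul_eq_mul]

lemma formB_taylor (n : ℕ) (f g : Polynomial ℂ) (hf : f.natDegree ≤ 2 * n)
    (hg : g.natDegree ≤ 2 * n) (c : ℂ) :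
    formB n (taylor c f) (taylor c g) = formB n f g := by
  set Φ : Polynomial ℂ := ∑ m ∈ Finset.range (2 * n + 1),
      C ((-1 : ℂ) ^ m) * (derivative^[m] f * derivative^[2 * n - m] g) with hΦ
  have heval : ∀ x : ℂ, Φ.eval x = formB n (taylor x f) (taylor x g) := by
    intro x
    rw [hΦ, formB, Polynomial.eval_finset_sum]
    refine Finset.sum_congr rfl fun m _ => ?_
    rw [Polynomial.eval_mul, Polynomial.eval_mul, Polynomial.eval_C,
      factorial_mul_taylor_coeff, factorial_mul_taylor_coeff, mul_assoc]
  have hderiv : derivative Φ = 0 := by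
    have hu : ∀ m ∈ Finset.range (2 * n + 1),
        derivative (C ((-1 : ℂ) ^ m) * (derivative^[m] f * derivative^[2 * n - m] g)) =
        (fun m => C ((-1 : ℂ) ^ m) * (derivative^[m] f * derivative^[2 * n + 1 - m] g)) m
          - (fun m => C ((-1 : ℂ) ^ m) *
              (derivative^[m] f * derivative^[2 * n + 1 - m] g)) (m + 1) := by
      intro m hm
      rw [Finset.mem_range] at hm
      have h1 : 2 * n + 1 - m = (2 * n - m) + 1 := by omega
      have h2 : 2 * n + 1 - (m + 1) = 2 * n - m := by omega
      simp only [derivative_C_mul, derivative_mul, derivative_C, zero_mul, zero_add, h1, h2,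
        Function.iterate_succ_apply', pow_succ, map_mul, map_neg, map_one, mul_add]
      ring
    rw [hΦ, derivative_sum, Finset.sum_congr rfl hu, Finset.sum_range_sub']
    have hf0 : derivative^[2 * n + 1] f = 0 :=
      Polynomial.iterate_derivative_eq_zero (lt_of_le_of_lt hf (Nat.lt_succ_self _))
    have hg0 : derivative^[2 * n + 1] g = 0 :=
      Polynomial.iterate_derivative_eq_zero (lt_of_le_of_lt hg (Nat.lt_succ_self _))
    simp [hf0, hg0]
  have hC : Φ = C (Φ.coeff 0) :=
    Polynomial.eq_C_of_natDegree_eq_zero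
      (Polynomial.natDegree_eq_zero_of_derivative_eq_zero hderiv)
  have h1 := heval c
  have h2 := heval 0
  rw [hC] at h1 h2
  simp only [Polynomial.eval_C] at h1 h2
  rw [← h1, h2, taylor_zero, taylor_zero]

lemma taylor_neg_pow (a : ℂ) (k : ℕ) :
    taylor (-a) ((X + C a) ^ k) = X ^ k := by
  have : taylor (-a) ((X + C a) ^ k) = (taylor (-a) (X + C a)) ^ k := by
    induction k with
    | zero => simp [taylor_one]
    | succ k ih => rw [pow_succ, pow_succ, taylor_mul, ih]
  rw [this, map_add, taylor_X, taylor_C, C_neg]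
  ring

lemma taylor_pos_pow (a : ℂ) (k : ℕ) :
    taylor a ((X ^ k : Polynomial ℂ)) = (X + C a) ^ k := by
  conv_lhs => rw [← taylor_neg_pow a k]
  rw [taylor_taylor]
  simp

lemma pow_dvd_iff_taylor (a : ℂ) (k : ℕ) (f : Polynomial ℂ) :
    (X + C a) ^ k ∣ f ↔ X ^ k ∣ taylor (-a) f := by
  constructor
  · rintro ⟨q, rfl⟩
    exact ⟨taylor (-a) q, by rw [taylor_mul, taylor_neg_pow]⟩
  · rintro ⟨q, hq⟩
    have hfe : f = taylor a (taylor (-a) f) := by rw [taylor_taylor]; simp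
    rw [hfe, hq, taylor_mul, taylor_pos_pow]
    exact ⟨taylor a q, rfl⟩

lemma mem_osculatingFlag {n : ℕ} {a : ℂ} {i : ℕ} {f : Polynomial ℂ} :
    f ∈ osculatingFlag n a i ↔
      f.degree ≤ (2 * n : ℕ) ∧ (X + C a) ^ (2 * n + 1 - i) ∣ f := by
  rw [osculatingFlag, Submodule.mem_inf, Polynomial.mem_degreeLE,
    Submodule.restrictScalars_mem, Ideal.mem_span_singleton]
  exact Iff.rfl

theorem osculatingFlag_orthogonal (n : ℕ) (hn : 0 < n) (a : ℂ) (i : ℕ)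
    (hi : i ≤ 2 * n + 1) (f : Polynomial ℂ) :
    (f ∈ Polynomial.degreeLE ℂ (2 * n) ∧
        ∀ g ∈ osculatingFlag n a i, formB n f g = 0) ↔
      f ∈ osculatingFlag n a (2 * n + 1 - i) := by
  rw [mem_osculatingFlag, Polynomial.mem_degreeLE]
  have hii : 2 * n + 1 - (2 * n + 1 - i) = i := by omega
  rw [hii]
  constructor
  · rintro ⟨hdeg, horth⟩
    refine ⟨hdeg, ?_⟩
    rw [pow_dvd_iff_taylor, Polynomial.X_pow_dvd_iff]
    intro d hd
    -- test against g = (X + C a)^(2n - d)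
    set k := 2 * n - d with hk
    have hdn : d ≤ 2 * n := by omega
    have hkk : 2 * n + 1 - i ≤ k := by omega
    have hg : ((X + C a) ^ k : Polynomial ℂ) ∈ osculatingFlag n a i := by
      rw [mem_osculatingFlag]
      constructor
      · refine Polynomial.natDegree_le_iff_degree_le.mp ?_
        rw [Polynomial.natDegree_pow, Polynomial.natDegree_X_add_C]
        omega
      · exact pow_dvd_pow _ hkk
    have hB := horth _ hg
    have hfdeg : f.natDegree ≤ 2 * n := Polynomial.natDegree_le_iff_degree_le.mpr hdeg
    have hgdeg : ((X + C a) ^ k : Polynomial ℂ).natDegree ≤ 2 * n := by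
      rw [Polynomial.natDegree_pow, Polynomial.natDegree_X_add_C]; omega
    have hinv := formB_taylor n f ((X + C a) ^ k) hfdeg hgdeg (-a)
    have hXk : taylor (-a) ((X + C a) ^ k : Polynomial ℂ) = X ^ k :=
      taylor_neg_pow a k
    rw [← hinv, hXk, formB] at hB
    have hsingle : ∑ m ∈ Finset.range (2 * n + 1),
        (-1 : ℂ) ^ m * ((m.factorial : ℂ) * (taylor (-a) f).coeff m) *
          (((2 * n - m).factorial : ℂ) * (X ^ k : Polynomial ℂ).coeff (2 * n - m))
        = (-1 : ℂ) ^ d * ((d.factorial : ℂ) * (taylor (-a) f).coeff d) * (k.factorial : ℂ) := by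
      rw [Finset.sum_eq_single d]
      · rw [Polynomial.coeff_X_pow, if_pos (by omega)]
        ring
      · intro m hm hmd
        rw [Finset.mem_range] at hm
        rw [Polynomial.coeff_X_pow, if_neg (by omega)]
        ring
      · intro h
        exact absurd (Finset.mem_range.mpr (by omega)) h
    rw [hsingle] at hB
    have h1 : ((-1 : ℂ) ^ d) ≠ 0 := pow_ne_zero _ (neg_ne_zero.mpr one_ne_zero)
    have h2 : (d.factorial : ℂ) ≠ 0 := Nat.cast_ne_zero.mpr d.factorial_ne_zero
    have h3 : (k.factorial : ℂ) ≠ 0 := Nat.cast_ne_zero.mpr k.factorial_ne_zero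
    by_contra hne
    exact mul_ne_zero (mul_ne_zero h1 (mul_ne_zero h2 hne)) h3 hB
  · rintro ⟨hdeg, hdvd⟩
    refine ⟨hdeg, fun g hg => ?_⟩
    rw [mem_osculatingFlag] at hg
    obtain ⟨hgdeg, hgdvd⟩ := hg
    have hfdeg : f.natDegree ≤ 2 * n := Polynomial.natDegree_le_iff_degree_le.mpr hdeg
    have hgdeg' : g.natDegree ≤ 2 * n := Polynomial.natDegree_le_iff_degree_le.mpr hgdeg
    rw [← formB_taylor n f g hfdeg hgdeg' (-a)]
    have hF : ∀ d < i, (taylor (-a) f).coeff d = 0 :=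
      Polynomial.X_pow_dvd_iff.mp ((pow_dvd_iff_taylor a i f).mp hdvd)
    have hG : ∀ d < 2 * n + 1 - i, (taylor (-a) g).coeff d = 0 :=
      Polynomial.X_pow_dvd_iff.mp ((pow_dvd_iff_taylor a _ g).mp hgdvd)
    rw [formB]
    apply Finset.sum_eq_zero
    intro m hm
    rw [Finset.mem_range] at hm
    by_cases hmi : m < i
    · rw [hF m hmi]; ring
    · rw [hG (2 * n - m) (by omega)]; ring
end

section
/- For i between 0 and 2n+1, the orthogonal complement of the subspace ℂ[z]_{≤ i-1} of polynomials of degree less than i, inside polynomials of degree at most 2n with the bilinear form ⟨·,·⟩, equals ℂ[z]_{≤ 2n-i} (polynomials of degree at most 2n-i). -/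
open Polynomial

theorem degreeLT_orthogonal (n : ℕ) (hn : 0 < n) (i : ℕ) (hi : i ≤ 2 * n + 1)
    (f : Polynomial ℂ) :
    (f ∈ Polynomial.degreeLE ℂ (2 * n) ∧
        ∀ g ∈ Polynomial.degreeLT ℂ i, formB n f g = 0) ↔
      f ∈ Polynomial.degreeLT ℂ (2 * n + 1 - i) := by
  have hcoeffLT : ∀ (p : Polynomial ℂ) (k : ℕ), p ∈ Polynomial.degreeLT ℂ k ↔
      ∀ m, k ≤ m → p.coeff m = 0 := by
    intro p k
    rw [Polynomial.mem_degreeLT, Polynomial.degree_lt_iff_coeff_zero]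
  constructor
  · rintro ⟨h1, h2⟩
    rw [hcoeffLT]
    intro m hm
    by_cases hm2 : 2 * n < m
    · exact Polynomial.coeff_eq_zero_of_degree_lt
        (lt_of_le_of_lt (Polynomial.mem_degreeLE.mp h1) (by exact_mod_cast hm2))
    · push_neg at hm2
      have hℓ : 2 * n - m < i := by omega
      have hX : (X : Polynomial ℂ) ^ (2 * n - m) ∈ Polynomial.degreeLT ℂ i := by
        rw [Polynomial.mem_degreeLT, Polynomial.degree_X_pow]
        exact_mod_cast hℓ
      have key := h2 _ hX
      unfold formB at key
      rw [Finset.sum_eq_single m] at key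
      · have hne : (m.factorial : ℂ) ≠ 0 := Nat.cast_ne_zero.mpr m.factorial_ne_zero
        have hne2 : (((2 * n - m).factorial : ℂ)) ≠ 0 :=
          Nat.cast_ne_zero.mpr (2 * n - m).factorial_ne_zero
        have hsign : ((-1 : ℂ)) ^ m ≠ 0 := pow_ne_zero _ (by norm_num)
        simp only [Polynomial.coeff_X_pow, if_true, eq_self_iff_true, mul_one] at key
        rcases mul_eq_zero.mp key with h | h
        · rcases mul_eq_zero.mp h with h' | h'
          · exact absurd h' hsign
          · exact (mul_eq_zero.mp h').resolve_left hne
        · exact absurd h hne2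
      · intro j hj hjm
        have hj' : j ≤ 2 * n := by
          simp only [Finset.mem_range] at hj; omega
        have : 2 * n - m ≠ 2 * n - j := by omega
        rw [Polynomial.coeff_X_pow, if_neg (by omega)]
        ring
      · intro hmem
        exact absurd (Finset.mem_range.mpr (by omega)) hmem
  · intro h
    have hc := (hcoeffLT f _).mp h
    constructor
    · rw [Polynomial.mem_degreeLE, Polynomial.degree_le_iff_coeff_zero]
      intro m hm
      have : 2 * n < m := by exact_mod_cast hm
      exact hc m (by omega)
    · intro g hg
      have hgc := (hcoeffLT g i).mp hg
      unfold formB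
      apply Finset.sum_eq_zero
      intro m hmem
      simp only [Finset.mem_range] at hmem
      by_cases hfm : 2 * n + 1 - i ≤ m
      · simp [hc m hfm]
      · have : i ≤ 2 * n - m := by omega
        simp [hgc _ this]
end

section
/- Let σ = (σ^1 > σ^2 > … > σ^k > 0) be a strict partition with σ^1 ≤ n and k ≤ n, extended by σ^j = 0 for j > k. Define σ̄^i = σ^i - i + #{j ∈ ℕ : j ≤ i < j + σ^j} for 1 ≤ i ≤ n. Then the sequence σ̄^1 > σ̄^2 > … > σ̄^n is strictly decreasing and {|σ̄^1|, …, |σ̄^n|} = {1, …, n}. -/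
/-- `σ` is a strict partition with at most `n` parts, each at most `n`:
`σ 1 > σ 2 > … > σ k > 0` with `σ 1 ≤ n`, `k ≤ n`, and `σ j = 0` for `j > k`
(the value `σ 0` is irrelevant). -/
def IsStrictPartitionLe (n : ℕ) (σ : ℕ → ℕ) : Prop :=
  (∀ i, 1 ≤ i → σ i ≤ n) ∧
    (∀ i, 1 ≤ i → 0 < σ (i + 1) → σ (i + 1) < σ i) ∧
    (∀ i, 1 ≤ i → σ i = 0 → σ (i + 1) = 0) ∧
    (∀ i, n < i → σ i = 0)

/-- `#{j ∈ ℕ : j ≤ i < j + σ j}` (with `j ≥ 1`). -/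
def countC (σ : ℕ → ℕ) (i : ℕ) : ℕ :=
  ((Finset.Icc 1 i).filter (fun j => i < j + σ j)).card

/-- `σ̄ i = σ i - i + #{j : j ≤ i < j + σ j}`, an integer. -/
def barSigma (σ : ℕ → ℕ) (i : ℕ) : ℤ :=
  (σ i : ℤ) - i + countC σ i

/-- `σ̃ i = σ i + #{j : j ≤ i < j + σ j}`. -/
def tildeSigma (σ : ℕ → ℕ) (i : ℕ) : ℕ :=
  σ i + countC σ i

section helpers
variable {n : ℕ} {σ : ℕ → ℕ}

lemma sp_zero_mono (hσ : IsStrictPartitionLe n σ) :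
    ∀ i j, 1 ≤ i → i ≤ j → σ i = 0 → σ j = 0 := by
  intro i j hi hij h0
  induction j with
  | zero => omega
  | succ m ih =>
    rcases Nat.lt_or_ge m i with h | h
    · have h' : i = m + 1 := by omega
      subst h'; exact h0
    · exact hσ.2.2.1 m (by omega) (ih (by omega))

lemma sp_anti (hσ : IsStrictPartitionLe n σ) :
    ∀ i j, 1 ≤ i → i ≤ j → σ j ≤ σ i := by
  intro i j hi hij
  induction j with
  | zero => omega
  | succ m ih =>
    rcases Nat.lt_or_ge m i with h | h
    · have h' : i = m + 1 := by omega
      subst h'; exact le_refl _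
    · have hm := ih (by omega)
      rcases Nat.eq_zero_or_pos (σ (m+1)) with h0 | h0
      · omega
      · have := hσ.2.1 m (by omega) h0; omega

lemma sp_g_anti (hσ : IsStrictPartitionLe n σ) :
    ∀ i j, 1 ≤ i → i ≤ j → 0 < σ j → j + σ j ≤ i + σ i := by
  intro i j hi hij hpos
  induction j with
  | zero => omega
  | succ m ih =>
    rcases Nat.lt_or_ge m i with h | h
    · have h' : i = m + 1 := by omega
      subst h'; exact le_refl _
    · have hmpos : 0 < σ m := by
        by_contra hc
        have := sp_zero_mono hσ m (m+1) (by omega) (by omega) (by omega)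
        omega
      have h2 := hσ.2.1 m (by omega) hpos
      have := ih (by omega) hmpos
      omega

lemma countC_eq_of_pos (hσ : IsStrictPartitionLe n σ) {i : ℕ} (hi : 1 ≤ i)
    (hpos : 0 < σ i) : countC σ i = i := by
  unfold countC
  rw [Finset.filter_true_of_mem, Nat.card_Icc]
  · omega
  · intro j hj
    rw [Finset.mem_Icc] at hj
    have := sp_g_anti hσ j i hj.1 hj.2 hpos
    omega

/-- The counted set is down-closed. -/
lemma sp_down (hσ : IsStrictPartitionLe n σ) {i x y : ℕ}
    (hx : x ∈ (Finset.Icc 1 i).filter (fun j => i < j + σ j))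
    (hy1 : 1 ≤ y) (hyx : y ≤ x) :
    y ∈ (Finset.Icc 1 i).filter (fun j => i < j + σ j) := by
  simp only [Finset.mem_filter, Finset.mem_Icc] at hx ⊢
  have hxpos : 0 < σ x := by omega
  have := sp_g_anti hσ y x hy1 hyx hxpos
  omega

/-- If `σ i = 0` (and `i ≥ 1`) then `countC σ i < i`. -/
lemma countC_lt_of_zero (hσ : IsStrictPartitionLe n σ) {i : ℕ} (hi : 1 ≤ i)
    (h0 : σ i = 0) : countC σ i < i := by
  have hsub : (Finset.Icc 1 i).filter (fun j => i < j + σ j) ⊆ Finset.Icc 1 (i-1) := by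
    intro x hx
    have hx' := hx
    simp only [Finset.mem_filter, Finset.mem_Icc] at hx'
    rw [Finset.mem_Icc]
    rcases Nat.lt_or_ge x i with h | h
    · omega
    · have h' : x = i := by omega
      subst h'; omega
  have := Finset.card_le_card hsub
  rw [Nat.card_Icc] at this
  unfold countC
  omega

/-- Elements up to the cardinality are in the down-closed counted set. -/
lemma mem_of_le_countC (hσ : IsStrictPartitionLe n σ) {i y : ℕ}
    (hy1 : 1 ≤ y) (hyc : y ≤ countC σ i) :
    y ∈ (Finset.Icc 1 i).filter (fun j => i < j + σ j) := by
  by_contra hc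
  have hsub : (Finset.Icc 1 i).filter (fun j => i < j + σ j) ⊆ Finset.Icc 1 (y-1) := by
    intro x hx
    rw [Finset.mem_Icc]
    have hx' := hx
    simp only [Finset.mem_filter, Finset.mem_Icc] at hx'
    rcases Nat.lt_or_ge x y with h | h
    · omega
    · exact absurd (sp_down hσ hx hy1 h) hc
  have := Finset.card_le_card hsub
  rw [Nat.card_Icc] at this
  unfold countC at hyc
  omega

/-- Key claim: `j - countC σ j` (for `σ j = 0`) is never a positive part. -/
lemma key_claim (hσ : IsStrictPartitionLe n σ) {i j : ℕ} (hi : 1 ≤ i) (hj : 1 ≤ j)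
    (hpos : 0 < σ i) (h0 : σ j = 0) : σ i ≠ j - countC σ j := by
  intro heq
  set c := countC σ j with hc
  have hclt : c < j := countC_lt_of_zero hσ hj h0
  -- c + 1 is not in the set
  have hnotmem : (c+1) ∉ (Finset.Icc 1 j).filter (fun m => j < m + σ m) := by
    intro hmem
    have h1 : Finset.Icc 1 (c+1) ⊆ (Finset.Icc 1 j).filter (fun m => j < m + σ m) := by
      intro y hy
      rw [Finset.mem_Icc] at hy
      exact sp_down hσ hmem hy.1 hy.2
    have := Finset.card_le_card h1
    rw [Nat.card_Icc] at this
    unfold countC at hc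
    omega
  have hsucc : σ (c+1) ≤ j - c - 1 := by
    by_contra hcon
    apply hnotmem
    simp only [Finset.mem_filter, Finset.mem_Icc]
    omega
  -- so σ i > σ (c+1), hence i ≤ c
  have hic : i ≤ c := by
    by_contra hcon
    have := sp_anti hσ (c+1) i (by omega) (by omega)
    omega
  have hmem := mem_of_le_countC hσ hi (show i ≤ countC σ j by omega)
  simp only [Finset.mem_filter, Finset.mem_Icc] at hmem
  omega

lemma barSigma_pos_eq (hσ : IsStrictPartitionLe n σ) {i : ℕ} (hi : 1 ≤ i)
    (hpos : 0 < σ i) : barSigma σ i = (σ i : ℤ) := by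
  unfold barSigma
  rw [countC_eq_of_pos hσ hi hpos]
  ring

lemma barSigma_zero_eq (hσ : IsStrictPartitionLe n σ) {i : ℕ} (hi : 1 ≤ i)
    (h0 : σ i = 0) : barSigma σ i = (countC σ i : ℤ) - i := by
  unfold barSigma
  rw [h0]
  push_cast
  ring

lemma countC_succ_le (hσ : IsStrictPartitionLe n σ) {i : ℕ} (hi : 1 ≤ i)
    (h0 : σ (i+1) = 0) : countC σ (i+1) ≤ countC σ i := by
  unfold countC
  apply Finset.card_le_card
  intro x hx
  simp only [Finset.mem_filter, Finset.mem_Icc] at hx ⊢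
  rcases Nat.lt_or_ge x (i+1) with h | h
  · omega
  · have h' : x = i + 1 := by omega
    subst h'; omega

end helpers

theorem barSigma_strictAnti_and_abs_image (n : ℕ) (hn : 0 < n) (σ : ℕ → ℕ)
    (hσ : IsStrictPartitionLe n σ) :
    (∀ i, 1 ≤ i → i < n → barSigma σ (i + 1) < barSigma σ i) ∧
      (Finset.Icc 1 n).image (fun i => (barSigma σ i).natAbs) = Finset.Icc 1 n := by
  have hstep : ∀ i, 1 ≤ i → barSigma σ (i + 1) < barSigma σ i := by
    intro i hi
    rcases Nat.eq_zero_or_pos (σ (i+1)) with h1 | h1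
    · rcases Nat.eq_zero_or_pos (σ i) with h2 | h2
      · rw [barSigma_zero_eq hσ hi h2, barSigma_zero_eq hσ (by omega) h1]
        have := countC_succ_le hσ hi h1
        omega
      · rw [barSigma_pos_eq hσ hi h2, barSigma_zero_eq hσ (by omega) h1]
        have := countC_lt_of_zero hσ (by omega) h1
        omega
    · have h2 : 0 < σ i := by
        by_contra hc
        have := hσ.2.2.1 i hi (by omega)
        omega
      rw [barSigma_pos_eq hσ hi h2, barSigma_pos_eq hσ (by omega) h1]
      have := hσ.2.1 i hi h1
      omega
  have hanti : ∀ i j, 1 ≤ i → i < j → barSigma σ j < barSigma σ i := by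
    intro i j hi hij
    induction j with
    | zero => omega
    | succ m ih =>
      rcases Nat.lt_or_ge i m with h | h
      · exact lt_trans (hstep m (by omega)) (ih h)
      · have : m = i := by omega
        subst this
        exact hstep _ hi
  constructor
  · intro i hi _; exact hstep i hi
  · apply Finset.eq_of_subset_of_card_le
    · intro x hx
      rw [Finset.mem_image] at hx
      obtain ⟨i, hi, rfl⟩ := hx
      rw [Finset.mem_Icc] at hi
      rw [Finset.mem_Icc]
      rcases Nat.eq_zero_or_pos (σ i) with h0 | h0
      · rw [barSigma_zero_eq hσ hi.1 h0]
        have := countC_lt_of_zero hσ hi.1 h0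
        omega
      · rw [barSigma_pos_eq hσ hi.1 h0]
        have := hσ.1 i hi.1
        omega
    · rw [Finset.card_image_of_injOn]
      intro i hi j hj heq
      simp only [Finset.coe_Icc, Set.mem_Icc] at hi hj
      by_contra hne
      -- wlog i < j
      have key : ∀ a b, 1 ≤ a → a < b → b ≤ n →
          (barSigma σ a).natAbs ≠ (barSigma σ b).natAbs := by
        intro a b ha hab hb habs
        have hlt := hanti a b ha hab
        rcases Nat.eq_zero_or_pos (σ b) with hb0 | hb0
        · have hbeq := barSigma_zero_eq hσ (by omega) hb0
          have hbc := countC_lt_of_zero hσ (by omega) hb0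
          rcases Nat.eq_zero_or_pos (σ a) with ha0 | ha0
          · have haeq := barSigma_zero_eq hσ ha ha0
            have hac := countC_lt_of_zero hσ ha ha0
            rw [haeq, hbeq] at habs hlt
            omega
          · have haeq := barSigma_pos_eq hσ ha ha0
            have := key_claim hσ ha (by omega) ha0 hb0
            rw [haeq, hbeq] at habs
            omega
        · have ha0 : 0 < σ a := by
            rcases Nat.eq_zero_or_pos (σ a) with h | h
            · have := sp_zero_mono hσ a b ha (by omega) h
              omega
            · exact h
          rw [barSigma_pos_eq hσ ha ha0, barSigma_pos_eq hσ (by omega) hb0]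
            at habs hlt
          omega
      rcases Nat.lt_or_ge i j with h | h
      · exact key i j hi.1 h hj.2 heq
      · exact key j i hj.1 (by omega) hi.2 heq.symm
end

section
/- If f_1, …, f_d ∈ ℂ[z] are linearly independent and f_i ∈ (z+a)^{c_i} ℂ[z] for distinct nonnegative integers c_1 > c_2 > … > c_d, then (z+a)^{∑_i (c_i - (d - i))} divides Wr_{f_1,…,f_d}(z). -/
open Polynomial

/-- The Wronskian of `d` polynomials: `det (f_j^{(i)})_{0 ≤ i,j < d}`. -/
noncomputable def wronskian (d : ℕ) (f : Fin d → Polynomial ℂ) : Polynomial ℂ :=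
  Matrix.det (Matrix.of fun i j : Fin d => (Polynomial.derivative)^[(i : ℕ)] (f j))

lemma dvd_deriv_aux (a : ℂ) (n : ℕ) (p : Polynomial ℂ) (h : (X + C a) ^ n ∣ p) :
    (X + C a) ^ (n - 1) ∣ derivative p := by
  obtain ⟨q, rfl⟩ := h
  rw [derivative_mul, derivative_pow, derivative_add, derivative_X, derivative_C, add_zero,
    mul_one]
  exact dvd_add ((dvd_rfl.mul_left _).mul_right _)
    ((pow_dvd_pow _ (Nat.sub_le n 1)).mul_right _)

lemma dvd_iter_aux (a : ℂ) (n : ℕ) (p : Polynomial ℂ) (h : (X + C a) ^ n ∣ p) (k : ℕ) :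
    (X + C a) ^ (n - k) ∣ derivative^[k] p := by
  induction k with
  | zero => simpa using h
  | succ k ih =>
      rw [Function.iterate_succ_apply']
      have := dvd_deriv_aux a (n - k) _ ih
      rwa [Nat.sub_sub] at this

lemma fin_le_aux {d : ℕ} (g : Fin d → ℕ) (hg : ∀ i j : Fin d, i < j → g i < g j) :
    ∀ (m : ℕ) (i : Fin d), (i : ℕ) = m → m ≤ g i := by
  intro m
  induction m with
  | zero => simp
  | succ m ih =>
      intro i hi
      have hm : m < d := lt_of_le_of_lt (by omega) i.isLt
      have h1 : g ⟨m, hm⟩ < g i := hg _ _ (by simp [Fin.lt_def, hi])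
      have h2 := ih ⟨m, hm⟩ rfl
      omega

lemma strictanti_bound {d : ℕ} (c : Fin d → ℕ) (hc : ∀ i j : Fin d, i < j → c j < c i)
    (i : Fin d) : d - 1 - (i : ℕ) ≤ c i := by
  have key := fin_le_aux (fun k => c (Fin.rev k))
    (fun k l hkl => hc _ _ (Fin.rev_lt_rev.mpr hkl)) (Fin.rev i : ℕ) (Fin.rev i) rfl
  simp only [Fin.rev_rev] at key
  have : (Fin.rev i : ℕ) = d - 1 - (i : ℕ) := by
    have := Fin.val_rev i
    omega
  omega

theorem wronskian_divisibility (d : ℕ) (a : ℂ) (f : Fin d → Polynomial ℂ)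
    (hind : LinearIndependent ℂ f)
    (c : Fin d → ℕ) (hc : ∀ i j : Fin d, i < j → c j < c i)
    (hdiv : ∀ i, (X + C a) ^ (c i) ∣ f i) :
    (X + C a) ^ (∑ i : Fin d, (c i - (d - 1 - (i : ℕ)))) ∣ wronskian d f := by
  classical
  unfold _root_.wronskian
  rw [Matrix.det_apply]
  apply Finset.dvd_sum
  intro σ _
  have hprod : (X + C a) ^ (∑ i : Fin d, (c i - (σ i : ℕ))) ∣
      ∏ i : Fin d, (Matrix.of fun i j : Fin d => derivative^[(i : ℕ)] (f j)) (σ i) i := by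
    rw [← Finset.prod_pow_eq_pow_sum]
    exact Finset.prod_dvd_prod_of_dvd _ _
      (fun i _ => dvd_iter_aux a (c i) (f i) (hdiv i) (σ i : ℕ))
  have hle : (∑ i : Fin d, (c i - (d - 1 - (i : ℕ)))) ≤ ∑ i : Fin d, (c i - (σ i : ℕ)) := by
    have hb : ∀ i : Fin d, d - 1 - (i : ℕ) ≤ c i := strictanti_bound c hc
    rw [Finset.sum_tsub_distrib _ (fun i _ => hb i)]
    have hσ : (∑ i : Fin d, ((σ i : ℕ))) = ∑ i : Fin d, (i : ℕ) :=
      Equiv.sum_comp σ (fun i => (i : ℕ))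
    have hrev : (∑ i : Fin d, (d - 1 - (i : ℕ))) = ∑ i : Fin d, (i : ℕ) := by
      rw [← Equiv.sum_comp (Fin.revPerm : Equiv.Perm (Fin d)) (fun i : Fin d => (i : ℕ))]
      refine Finset.sum_congr rfl (fun i _ => ?_)
      simp only [Fin.revPerm_apply]
      have := Fin.val_rev i
      have := i.isLt
      omega
    have hsub : (∑ i : Fin d, c i) - ∑ i : Fin d, ((σ i : ℕ)) ≤
        ∑ i : Fin d, (c i - (σ i : ℕ)) := by
      rw [tsub_le_iff_right]
      calc (∑ i : Fin d, c i) ≤ ∑ i : Fin d, ((c i - (σ i : ℕ)) + (σ i : ℕ)) :=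
            Finset.sum_le_sum (fun i _ => by omega)
        _ = _ := by rw [Finset.sum_add_distrib]
    rw [hσ, ← hrev] at hsub
    exact hsub
  have hdvd2 := dvd_trans (pow_dvd_pow _ hle) hprod
  rw [Units.smul_def, zsmul_eq_mul]
  exact hdvd2.mul_left _
end
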